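/- arXiv:2206.03024 — 4 statements merged into one kernel-verified Lean document; each statement's English description precedes it below -/
import Mathlib

section
/- Let $F$ be a finite field with $q$ elements, $n \geq 1$, $1 \leq r \leq n$. The number of $n \times n$ matrices $X$ over $F$ with $\mathrm{rank}(X) = r$ and $(1,1)$-entry equal to $0$ is $q^{-1}|M(n,n,r,q)| + (q^r - q^{r-1})|M(n-1,n-1,r,q)| + (q^{r-2} - q^{r-1})|M(n-1,n-1,r-1,q)|$, where $|M(n,m,r,q)|$ denotes the number of $n \times m$ matrices of rank $r$ over $F$. -/
/-!
Splitting by the value of the `(1,1)`-entry, and rescaling, gives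
`|M(n,n,r)| = N₀ + (q - 1) N₁` where `N₀` is the count in question and `N₁` counts the rank-`r`
matrices with `(1,1)`-entry `1`. Such a matrix is `fromBlocks 1 b c D`, whose rank is
`1 + rank (D - c b)` (Schur complement), so `N₁ = q^(2(n-1)) |M(n-1,n-1,r-1)|`.
The claim is then equivalent to the recurrence
`|M(k+1,l+1,r)| = q^r |M(k,l,r)| + (q^(k+l+1) - q^(r-1)) |M(k,l,r-1)|`, which follows from the
closed form `|M(k,l,r)| = ∏_{j<r} (q^k - q^j)(q^l - q^j)/(q^r - q^j)`. The closed form is proved by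
induction on the number of rows: a new row raises the rank exactly when it lies outside the row
span, which happens for `q^l - q^rank` of the `q^l` possible rows.
-/

open Matrix

open Module Submodule

theorem Submodule.finrank_prod {K V W : Type*} [Field K] [AddCommGroup V] [Module K V]
    [AddCommGroup W] [Module K W] (p : Submodule K V) (q : Submodule K W)
    [FiniteDimensional K p] [FiniteDimensional K q] :
    finrank K (p.prod q) = finrank K p + finrank K q := by
  have hinj : Function.Injective (p.subtype.prodMap q.subtype) :=
    Prod.map_injective.mpr ⟨p.injective_subtype, q.injective_subtype⟩
  rw [← Module.finrank_prod, ← LinearMap.finrank_range_of_inj hinj, LinearMap.range_prodMap,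
    range_subtype, range_subtype]

namespace Matrix

variable {K : Type*} [Field K] {l m n o : Type*}

theorem rank_eq_zero_iff [Fintype m] (A : Matrix l m K) : A.rank = 0 ↔ A = 0 := by
  classical
  rw [rank, Submodule.finrank_eq_zero, LinearMap.range_eq_bot, ← toLin'_apply',
    LinearEquiv.map_eq_zero_iff]

theorem rank_fromBlocks_zero_zero [Fintype m] [Fintype o] (A : Matrix l m K)
    (D : Matrix n o K) : (fromBlocks A 0 0 D).rank = A.rank + D.rank := by
  let eRow := LinearEquiv.sumArrowLequivProdArrow l n K K
  let eCol := LinearEquiv.sumArrowLequivProdArrow m o K K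
  have hcomp : (fromBlocks A 0 0 D).mulVecLin =
      eRow.symm.toLinearMap ∘ₗ (A.mulVecLin.prodMap D.mulVecLin) ∘ₗ eCol.toLinearMap := by
    ext v i
    rcases i with i | i <;> simp [eRow, eCol, fromBlocks_mulVec] <;> rfl
  rw [rank, hcomp, LinearMap.range_comp, LinearMap.range_comp_of_range_eq_top _ eCol.range,
    LinearEquiv.finrank_map_eq, LinearMap.range_prodMap, Submodule.finrank_prod, rank, rank]

theorem rank_fromBlocks_of_invertible₁₁ [Fintype l] [DecidableEq l] [Fintype n] [DecidableEq n]
    [Fintype o] [DecidableEq o] (A : Matrix l l K) [Invertible A] (B : Matrix l o K)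
    (C : Matrix n l K) (D : Matrix n o K) :
    (fromBlocks A B C D).rank = Fintype.card l + (D - C * ⅟A * B).rank := by
  have hL : IsUnit (fromBlocks 1 0 (C * ⅟A) 1 : Matrix (l ⊕ n) (l ⊕ n) K).det := by simp
  have hU : IsUnit (fromBlocks 1 (⅟A * B) 0 1 : Matrix (l ⊕ o) (l ⊕ o) K).det := by simp
  rw [fromBlocks_eq_of_invertible₁₁, rank_mul_eq_left_of_isUnit_det _ _ hU,
    rank_mul_eq_right_of_isUnit_det _ _ hL, rank_fromBlocks_zero_zero,
    rank_of_isUnit A (isUnit_of_invertible A)]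

theorem rank_fromBlocks_one₁₁ [Fintype l] [DecidableEq l] [Fintype n]
    [DecidableEq n] [Fintype o] [DecidableEq o] (B : Matrix l o K) (C : Matrix n l K)
    (D : Matrix n o K) : (fromBlocks 1 B C D).rank = Fintype.card l + (D - C * B).rank := by
  let _ : Invertible (1 : Matrix l l K) := invertibleOne
  simpa using rank_fromBlocks_of_invertible₁₁ (1 : Matrix l l K) B C D

theorem span_range_cons {k : ℕ} (Y : Matrix (Fin k) m K) (x : m → K) :
    span K (Set.range (of (Fin.cons x Y))) = span K (insert x (Set.range Y)) :=
  congrArg (span K) (Fin.range_cons x Y)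

variable [Fintype m] {k : ℕ} (Y : Matrix (Fin k) m K) {x : m → K}

theorem rank_cons_of_mem (hx : x ∈ span K (Set.range Y)) : (of (Fin.cons x Y)).rank = Y.rank := by
  rw [rank_eq_finrank_span_row, rank_eq_finrank_span_row, row, row, span_range_cons,
    span_insert_eq_span hx]

theorem rank_cons_of_notMem (hx : x ∉ span K (Set.range Y)) :
    (of (Fin.cons x Y)).rank = Y.rank + 1 := by
  rw [rank_eq_finrank_span_row, rank_eq_finrank_span_row, row, row, span_range_cons, span_insert,
    sup_comm, finrank_sup_span_singleton hx]

end Matrix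

/-- The number of linearly independent `r`-tuples of vectors in `𝔽_q^k`. -/
def frameCount {R : Type*} [CommRing R] (q : R) (k r : ℕ) : R :=
  ∏ j ∈ Finset.range r, (q ^ k - q ^ j)

section FrameCount

variable {R : Type*} [CommRing R] (q : R)

@[simp]
theorem frameCount_zero_right (k : ℕ) : frameCount q k 0 = 1 := by
  simp [frameCount]

theorem frameCount_succ_right (k r : ℕ) :
    frameCount q k (r + 1) = frameCount q k r * (q ^ k - q ^ r) :=
  Finset.prod_range_succ _ _

theorem frameCount_zero_left_succ (r : ℕ) : frameCount q 0 (r + 1) = 0 :=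
  Finset.prod_eq_zero (Finset.mem_range.mpr r.succ_pos) (by simp)

theorem frameCount_succ_succ (k r : ℕ) :
    frameCount q (k + 1) (r + 1) = (q ^ (k + 1) - 1) * q ^ r * frameCount q k r := by
  have hshift : ∀ j ∈ Finset.range r, q ^ (k + 1) - q ^ (j + 1) = q * (q ^ k - q ^ j) :=
    fun j _ => by ring
  rw [frameCount, Finset.prod_range_succ', Finset.prod_congr rfl hshift, Finset.prod_mul_distrib,
    Finset.prod_const, Finset.card_range, frameCount, pow_zero]
  ring

end FrameCount

theorem frameCount_self_ne_zero {R : Type*} [CommRing R] [LinearOrder R] [IsStrictOrderedRing R]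
    {q : R} (hq : 1 < q) (r : ℕ) : frameCount q r r ≠ 0 :=
  Finset.prod_ne_zero_iff.mpr fun _ hj =>
    sub_ne_zero.mpr (pow_lt_pow_right₀ hq (Finset.mem_range.mp hj)).ne'

noncomputable def rankCount (F : Type*) [Field F] (k l r : ℕ) : ℕ :=
  Nat.card {X : Matrix (Fin k) (Fin l) F // X.rank = r}

section RankCount

variable {F : Type*} [Field F]

theorem rankCount_zero_right (k l : ℕ) : rankCount F k l 0 = 1 := by
  rw [rankCount, Nat.card_congr (Equiv.subtypeEquivRight fun X => rank_eq_zero_iff X)]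
  simp

theorem rankCount_zero_left_succ (l r : ℕ) : rankCount F 0 l (r + 1) = 0 := by
  rw [rankCount, Nat.card_eq_zero]
  exact Or.inl ⟨fun X => by have := X.1.rank_le_height; omega⟩

def rankConsEquiv (k l r : ℕ) : {X : Matrix (Fin (k + 1)) (Fin l) F // X.rank = r} ≃
    Σ Y : Matrix (Fin k) (Fin l) F, {x : Fin l → F // (of (Fin.cons x Y)).rank = r} where
  toFun X := ⟨of (Fin.tail X.1), X.1 0, by
    rw [show of (Fin.cons (X.1 0) (of (Fin.tail X.1))) = X.1 from Fin.cons_self_tail X.1]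
    exact X.2⟩
  invFun p := ⟨of (Fin.cons p.2.1 p.1), p.2.2⟩
  left_inv X := Subtype.ext (Fin.cons_self_tail X.1)
  right_inv _ := rfl

variable [Fintype F]

local notation "q" => (Fintype.card F : ℤ)

theorem card_span_range_row {ι m : Type*} [Finite ι] [Fintype m] (Y : Matrix ι m F) :
    Nat.card (span F (Set.range Y)) = Fintype.card F ^ Y.rank := by
  rw [rank_eq_finrank_span_row, row, natCard_eq_pow_finrank (K := F), Nat.card_eq_fintype_card]

theorem card_notMem_span_range_row {ι m : Type*} [Finite ι] [Fintype m] (Y : Matrix ι m F) :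
    (Nat.card {x : m → F // x ∉ span F (Set.range Y)} : ℤ) = q ^ Fintype.card m - q ^ Y.rank := by
  classical
  rw [Nat.card_eq_fintype_card, Fintype.card_subtype_compl,
    Nat.cast_sub (Fintype.card_subtype_le _), ← Nat.card_eq_fintype_card,
    ← Nat.card_eq_fintype_card, card_span_range_row, Nat.card_fun,
    Nat.card_eq_fintype_card (α := F), Nat.card_eq_fintype_card (α := m)]
  push_cast
  rfl

theorem card_rank_cons_eq {k l : ℕ} (Y : Matrix (Fin k) (Fin l) F) (r : ℕ) :
    (Nat.card {x : Fin l → F // (of (Fin.cons x Y)).rank = r + 1} : ℤ) =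
      (if Y.rank = r + 1 then q ^ (r + 1) else 0) + (if Y.rank = r then q ^ l - q ^ r else 0) := by
  classical
  have hcons (x : Fin l → F) : (of (Fin.cons x Y)).rank =
      Y.rank + if x ∈ span F (Set.range Y) then 0 else 1 := by
    split_ifs with hx
    · exact rank_cons_of_mem Y hx
    · exact rank_cons_of_notMem Y hx
  by_cases hY : Y.rank = r + 1
  · have hiff (x : Fin l → F) : (of (Fin.cons x Y)).rank = r + 1 ↔ x ∈ span F (Set.range Y) := by
      rw [hcons, hY]; split_ifs <;> simpa
    rw [Nat.card_congr (Equiv.subtypeEquivRight hiff), if_pos hY, if_neg (by omega), add_zero]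
    exact_mod_cast (card_span_range_row Y).trans (by rw [hY])
  by_cases hY' : Y.rank = r
  · have hiff (x : Fin l → F) : (of (Fin.cons x Y)).rank = r + 1 ↔ x ∉ span F (Set.range Y) := by
      rw [hcons, hY']; split_ifs <;> simpa
    rw [Nat.card_congr (Equiv.subtypeEquivRight hiff), card_notMem_span_range_row]
    simp [hY']
  · have hempty (x : Fin l → F) : (of (Fin.cons x Y)).rank ≠ r + 1 := by
      rw [hcons]; split_ifs <;> omega
    simp [hY, hY', hempty]

theorem sum_ite_rank_eq {k l : ℕ} (s : ℕ) (c : ℤ) :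
    ∑ Y : Matrix (Fin k) (Fin l) F, (if Y.rank = s then c else 0) = c * rankCount F k l s := by
  rw [Finset.sum_ite, Finset.sum_const_zero, add_zero, Finset.sum_const, nsmul_eq_mul, mul_comm,
    rankCount, Nat.card_eq_fintype_card, Fintype.card_subtype]

theorem rankCount_succ_left (k l r : ℕ) :
    (rankCount F (k + 1) l (r + 1) : ℤ) =
      q ^ (r + 1) * rankCount F k l (r + 1) + (q ^ l - q ^ r) * rankCount F k l r := by
  classical
  rw [rankCount, Nat.card_congr (rankConsEquiv k l (r + 1)), Nat.card_sigma]
  push_cast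
  simp only [card_rank_cons_eq, Finset.sum_add_distrib, sum_ite_rank_eq]

theorem rankCount_mul_frameCount (k l r : ℕ) :
    (rankCount F k l r : ℤ) * frameCount q r r = frameCount q k r * frameCount q l r := by
  induction k generalizing r with
  | zero =>
    cases r with
    | zero => simp [rankCount_zero_right]
    | succ s => simp [rankCount_zero_left_succ, frameCount_zero_left_succ]
  | succ k ih =>
    cases r with
    | zero => simp [rankCount_zero_right]
    | succ s =>
      have ih₁ := ih (s + 1)
      have ih₀ := ih s
      rw [frameCount_succ_succ, frameCount_succ_right q k, frameCount_succ_right q l] at ih₁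
      rw [rankCount_succ_left, frameCount_succ_succ, frameCount_succ_succ,
        frameCount_succ_right q l]
      linear_combination q ^ (s + 1) * ih₁ + (q ^ l - q ^ s) * (q ^ (s + 1) - 1) * q ^ s * ih₀

theorem rankCount_succ_succ (k l r : ℕ) :
    (rankCount F (k + 1) (l + 1) (r + 1) : ℤ) =
      q ^ (r + 1) * rankCount F k l (r + 1) + (q ^ (k + l + 1) - q ^ r) * rankCount F k l r := by
  have hq : (1 : ℤ) < q := by exact_mod_cast Fintype.one_lt_card
  refine mul_right_cancel₀ (frameCount_self_ne_zero hq (r + 1)) ?_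
  have h₁ := rankCount_mul_frameCount (F := F) k l (r + 1)
  have h₀ := rankCount_mul_frameCount (F := F) k l r
  rw [frameCount_succ_succ, frameCount_succ_right q k, frameCount_succ_right q l] at h₁
  rw [rankCount_mul_frameCount, frameCount_succ_succ, frameCount_succ_succ, frameCount_succ_succ]
  linear_combination -q ^ (r + 1) * h₁ - (q ^ (k + l + 1) - q ^ r) * (q ^ (r + 1) - 1) * q ^ r * h₀

end RankCount

section EntryCount

variable {F : Type*} [Field F] {m n : Type*} [Fintype n]

theorem card_rank_and_apply_eq_of_ne_zero (i : m) (j : n) (r : ℕ) {a : F} (ha : a ≠ 0) :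
    Nat.card {X : Matrix m n F // X.rank = r ∧ X i j = a} =
      Nat.card {X : Matrix m n F // X.rank = r ∧ X i j = 1} := by
  refine Nat.card_congr (Equiv.subtypeEquiv (MulAction.toPerm (Units.mk0 a ha)⁻¹) fun X => ?_)
  simp [Units.smul_def, rank_smul_of_mem_nonZeroDivisors, ha, inv_mul_eq_one₀, eq_comm]

theorem card_rank_eq_card_apply_eq_zero_add [Fintype F] [Fintype m] [DecidableEq m] (i : m) (j : n)
    (r : ℕ) :
    Nat.card {X : Matrix m n F // X.rank = r} =
      Nat.card {X : Matrix m n F // X.rank = r ∧ X i j = 0} +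
      (Fintype.card F - 1) * Nat.card {X : Matrix m n F // X.rank = r ∧ X i j = 1} := by
  classical
  let byEntry : {X : Matrix m n F // X.rank = r} ≃
      Σ a : F, {X : Matrix m n F // X.rank = r ∧ X i j = a} :=
    { toFun X := ⟨X.1 i j, X.1, X.2, rfl⟩
      invFun p := ⟨p.2.1, p.2.2.1⟩
      left_inv _ := rfl
      right_inv := fun ⟨_, _, _, h⟩ => by subst h; rfl }
  rw [Nat.card_congr byEntry, Nat.card_sigma, ← Finset.add_sum_erase _ _ (Finset.mem_univ 0),
    Finset.sum_congr rfl fun a ha =>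
      card_rank_and_apply_eq_of_ne_zero i j r (Finset.ne_of_mem_erase ha),
    Finset.sum_const, Finset.card_erase_of_mem (Finset.mem_univ _), Finset.card_univ, smul_eq_mul]

theorem card_rank_and_apply_inl_inl_eq_one [Fintype F] [Fintype m] [DecidableEq m] [DecidableEq n]
    (r : ℕ) :
    Nat.card {W : Matrix (Fin 1 ⊕ m) (Fin 1 ⊕ n) F //
        W.rank = r + 1 ∧ W (Sum.inl 0) (Sum.inl 0) = 1} =
      Fintype.card F ^ (Fintype.card m + Fintype.card n) *
        Nat.card {D : Matrix m n F // D.rank = r} := by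
  have hW (W : Matrix (Fin 1 ⊕ m) (Fin 1 ⊕ n) F) (h : W (Sum.inl 0) (Sum.inl 0) = 1) :
      fromBlocks 1 W.toBlocks₁₂ W.toBlocks₂₁ W.toBlocks₂₂ = W := by
    have h₁₁ : W.toBlocks₁₁ = 1 := by
      ext i j
      simp [Subsingleton.elim i 0, Subsingleton.elim j 0, toBlocks₁₁, h, one_apply]
    rw [← h₁₁, fromBlocks_toBlocks]
  let schur : {W : Matrix (Fin 1 ⊕ m) (Fin 1 ⊕ n) F //
        W.rank = r + 1 ∧ W (Sum.inl 0) (Sum.inl 0) = 1} ≃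
      Matrix (Fin 1) n F × Matrix m (Fin 1) F × {D : Matrix m n F // D.rank = r} :=
    { toFun W := (W.1.toBlocks₁₂, W.1.toBlocks₂₁,
        ⟨W.1.toBlocks₂₂ - W.1.toBlocks₂₁ * W.1.toBlocks₁₂, by
          have := W.2.1
          rw [← hW W.1 W.2.2, rank_fromBlocks_one₁₁, Fintype.card_fin] at this
          omega⟩)
      invFun p := ⟨fromBlocks 1 p.1 p.2.1 (p.2.2.1 + p.2.1 * p.1), by
        rw [rank_fromBlocks_one₁₁, add_sub_cancel_right, p.2.2.2, Fintype.card_fin, add_comm]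
        simp⟩
      left_inv W := Subtype.ext <| by simp [hW W.1 W.2.2]
      right_inv p := by simp }
  rw [Nat.card_congr schur, Nat.card_prod, Nat.card_prod]
  simp [Matrix]
  ring

end EntryCount

theorem card_rank_and_apply_zero_zero_eq_one {F : Type*} [Field F] [Fintype F] (m n r : ℕ) :
    Nat.card {X : Matrix (Fin (m + 1)) (Fin (n + 1)) F // X.rank = r + 1 ∧ X 0 0 = 1} =
      Fintype.card F ^ (m + n) * rankCount F m n r := by
  let e (k : ℕ) : Fin (k + 1) ≃ Fin 1 ⊕ Fin k := (finCongr (add_comm k 1)).trans finSumFinEquiv.symm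
  have he (k : ℕ) : (e k).symm (Sum.inl 0) = 0 := rfl
  calc _ = Nat.card {W : Matrix (Fin 1 ⊕ Fin m) (Fin 1 ⊕ Fin n) F //
          W.rank = r + 1 ∧ W (Sum.inl 0) (Sum.inl 0) = 1} :=
        Nat.card_congr (Equiv.subtypeEquiv (reindex (e m) (e n)) fun X => by simp [he])
    _ = _ := by
      rw [card_rank_and_apply_inl_inl_eq_one, Fintype.card_fin, Fintype.card_fin, rankCount]

theorem stmt2_general (F : Type) [Field F] [Fintype F] (q : ℕ) (hq : q = Fintype.card F)
    (n r : ℕ) (hn : 1 ≤ n) (hr : 1 ≤ r) :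
    (Nat.card {X : Matrix (Fin n) (Fin n) F // X.rank = r ∧ X ⟨0, hn⟩ ⟨0, hn⟩ = 0} : ℚ) =
      (q : ℚ)⁻¹ * Nat.card {X : Matrix (Fin n) (Fin n) F // X.rank = r} +
      ((q : ℚ) ^ (r : ℤ) - (q : ℚ) ^ ((r : ℤ) - 1)) *
        Nat.card {X : Matrix (Fin (n - 1)) (Fin (n - 1)) F // X.rank = r} +
      ((q : ℚ) ^ ((r : ℤ) - 2) - (q : ℚ) ^ ((r : ℤ) - 1)) *
        Nat.card {X : Matrix (Fin (n - 1)) (Fin (n - 1)) F // X.rank = r - 1} := by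
  obtain ⟨m, rfl⟩ : ∃ m, n = m + 1 := ⟨n - 1, by omega⟩
  obtain ⟨s, rfl⟩ : ∃ s, r = s + 1 := ⟨r - 1, by omega⟩
  set N₀ := Nat.card {X : Matrix (Fin (m + 1)) (Fin (m + 1)) F //
    X.rank = s + 1 ∧ X ⟨0, hn⟩ ⟨0, hn⟩ = 0}
  have hsplit : rankCount F (m + 1) (m + 1) (s + 1) =
      N₀ + (q - 1) * (q ^ (m + m) * rankCount F m m s) := by
    rw [hq, ← card_rank_and_apply_zero_zero_eq_one]
    exact card_rank_eq_card_apply_eq_zero_add _ _ _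
  have hrec : (rankCount F (m + 1) (m + 1) (s + 1) : ℚ) =
      (q : ℚ) ^ (s + 1) * rankCount F m m (s + 1) +
      ((q : ℚ) ^ (m + m + 1) - (q : ℚ) ^ s) * rankCount F m m s := by
    rw [hq]
    exact_mod_cast rankCount_succ_succ m m s
  have hq₁ : 1 ≤ q := hq ▸ Fintype.card_pos
  have hq₀ : (q : ℚ) ≠ 0 := by positivity
  qify [hq₁] at hsplit
  change _ = _ * (rankCount F (m + 1) (m + 1) (s + 1) : ℚ) + _ * (rankCount F m m (s + 1) : ℚ) +
    _ * (rankCount F m m s : ℚ)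
  rw [show ((s + 1 : ℕ) : ℤ) - 1 = (s : ℕ) by push_cast; ring,
    show ((s + 1 : ℕ) : ℤ) - 2 = (s : ℤ) - 1 by push_cast; ring,
    zpow_natCast, zpow_natCast, zpow_sub_one₀ hq₀, zpow_natCast]
  field_simp
  linear_combination -(q : ℚ) * hsplit + ((q : ℚ) - 1) * hrec

/-- the number of `n × n` matrices of rank `r` over `F_q` with `(1,1)`-entry `0`. -/
theorem stmt2 (F : Type) [Field F] [Fintype F] (q : ℕ) (hq : q = Fintype.card F)
    (n r : ℕ) (hn : 1 ≤ n) (hr : 1 ≤ r) (hrn : r ≤ n) :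
    (Nat.card {X : Matrix (Fin n) (Fin n) F // X.rank = r ∧ X ⟨0, hn⟩ ⟨0, hn⟩ = 0} : ℚ) =
      (q : ℚ)⁻¹ * Nat.card {X : Matrix (Fin n) (Fin n) F // X.rank = r} +
      ((q : ℚ) ^ (r : ℤ) - (q : ℚ) ^ ((r : ℤ) - 1)) *
        Nat.card {X : Matrix (Fin (n - 1)) (Fin (n - 1)) F // X.rank = r} +
      ((q : ℚ) ^ ((r : ℤ) - 2) - (q : ℚ) ^ ((r : ℤ) - 1)) *
        Nat.card {X : Matrix (Fin (n - 1)) (Fin (n - 1)) F // X.rank = r - 1} :=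
  stmt2_general F q hq n r hn hr
end

section
/- Let $F$ be a finite field with $q$ elements, $n \geq 1$, $1 \leq r \leq n$, and, for $\alpha \in F$, let $Y_{n,r}^{\alpha}$ denote the set of $n \times n$ matrices over $F$ of rank $r$ with $(1,1)$-entry equal to $\alpha$. Then $|Y_{n,r}^{0}| - |Y_{n,r}^{1}| = q^r |M(n-1,n-1,r,q)| - q^{r-1} |M(n-1,n-1,r-1,q)|$, where $|M(m,m,s,q)|$ is the number of $m \times m$ matrices of rank $s$ over $F$. -/
/-!
Write an `n × n` matrix as `[[a, b], [c, D]]` with `a` its `(1,1)`-entry. Its rank is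
`rank [b; D]`, plus one exactly when the first column `(a; c)` leaves the column space of
`[b; D]`; in particular it is unchanged by the column operation
`(a, c) ↦ (a + b ⬝ᵥ z, c + D z)`.

If `b ≠ 0`, pick `z` with `b ⬝ᵥ z = 1`: then `c ↦ c + D z` matches the matrices with corner `0`
and those with corner `1` rank for rank, so they cancel. If `b = 0`, the rank is `rank D` when
`a = 0` and `c ∈ col D`, and `rank D + 1` otherwise; so only the `q ^ rank D` columns `c ∈ col D`
contribute, with `rank D` for corner `0` against `rank D + 1` for corner `1`. Summing over `D`
gives `q ^ r |M_r| - q ^ (r - 1) |M_(r-1)|`.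
-/

open Matrix

namespace Matrix

variable {K : Type*} [Field K]

theorem rank_fromCols_replicateCol {m n : Type*} [Fintype m] [Fintype n]
    (v : m → K) (N : Matrix m n K) [Decidable (v ∈ LinearMap.range N.mulVecLin)] :
    (fromCols (replicateCol Unit v) N).rank =
      N.rank + if v ∈ LinearMap.range N.mulVecLin then 0 else 1 := by
  have hcols : (fromCols (replicateCol Unit v) N).col = Sum.elim (fun _ => v) N.col := by
    ext (j | j) i <;> rfl
  have hrange : LinearMap.range (fromCols (replicateCol Unit v) N).mulVecLin =
      LinearMap.range N.mulVecLin ⊔ K ∙ v := by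
    rw [range_mulVecLin, range_mulVecLin, hcols, Set.Sum.elim_range, Set.range_const,
      Submodule.span_union, sup_comm]
  rw [rank, hrange]
  split_ifs with hv
  · rw [sup_eq_left.mpr ((Submodule.span_singleton_le_iff_mem _ _).mpr hv), add_zero, rank]
  · exact Submodule.finrank_sup_span_singleton hv

theorem rank_fromRows_zero {R m₁ m n : Type*} [CommRing R] [StrongRankCondition R]
    [Fintype m] [Fintype n] (A : Matrix m n R) :
    (fromRows (0 : Matrix m₁ n R) A).rank = A.rank := by
  classical
  refine le_antisymm ?_ (rank_submatrix_le (fromRows 0 A) Sum.inr id)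
  have h : fromRows (0 : Matrix m₁ m R) 1 * A = fromRows 0 A := by
    rw [fromRows_mul, Matrix.zero_mul, Matrix.one_mul]
  exact h ▸ rank_mul_le_right _ _

theorem card_rank_reindex {R ι κ : Type*} [CommRing R] [Fintype ι] [Fintype κ] (e : ι ≃ κ)
    (r : ℕ) (i : ι) (α : R) :
    Nat.card {X : Matrix κ κ R // X.rank = r ∧ X (e i) (e i) = α} =
      Nat.card {X : Matrix ι ι R // X.rank = r ∧ X i i = α} :=
  Nat.card_congr ((reindex e e).subtypeEquiv fun X => by simp).symm

variable {ι : Type*}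

def bordered {α : Type*} (a : α) (b c : ι → α) (D : Matrix ι ι α) :
    Matrix (Unit ⊕ ι) (Unit ⊕ ι) α :=
  fromBlocks (of fun _ _ => a) (replicateRow Unit b) (replicateCol Unit c) D

theorem bordered_eq_fromCols {α : Type*} (a : α) (b c : ι → α) (D : Matrix ι ι α) :
    bordered a b c D =
      fromCols (replicateCol Unit (Sum.elim (fun _ => a) c)) (fromRows (replicateRow Unit b) D) := by
  ext (i | i) (j | j) <;> rfl

theorem bordered_toBlocks {α : Type*} (X : Matrix (Unit ⊕ ι) (Unit ⊕ ι) α) :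
    bordered (X (.inl ()) (.inl ())) (fun j => X (.inl ()) (.inr j)) (fun i => X (.inr i) (.inl ()))
      X.toBlocks₂₂ = X := by
  ext (i | i) (j | j) <;> rfl

theorem rank_bordered_add_mulVec [Fintype ι] (a : K) (b c z : ι → K) (D : Matrix ι ι K) :
    (bordered (a + b ⬝ᵥ z) b (c + D *ᵥ z) D).rank = (bordered a b c D).rank := by
  classical
  have hcol : Sum.elim (fun _ => a + b ⬝ᵥ z) (c + D *ᵥ z) =
      Sum.elim (fun _ => a) c + fromRows (replicateRow Unit b) D *ᵥ z := by
    rw [fromRows_mulVec, replicateRow_mulVec_eq_const, ← Sum.elim_add_add]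
    rfl
  have hmem : fromRows (replicateRow Unit b) D *ᵥ z ∈
      LinearMap.range (fromRows (replicateRow Unit b) D).mulVecLin := ⟨z, rfl⟩
  rw [bordered_eq_fromCols, bordered_eq_fromCols, hcol, rank_fromCols_replicateCol,
    rank_fromCols_replicateCol, Submodule.add_mem_iff_left _ hmem]

theorem rank_bordered_zero_row [Fintype ι] [DecidableEq K] (a : K) (c : ι → K)
    (D : Matrix ι ι K) [Decidable (c ∈ LinearMap.range D.mulVecLin)] :
    (bordered a 0 c D).rank =
      D.rank + if a = 0 ∧ c ∈ LinearMap.range D.mulVecLin then 0 else 1 := by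
  classical
  have hmem : Sum.elim (fun _ => a) c ∈
      LinearMap.range (fromRows (0 : Matrix Unit ι K) D).mulVecLin ↔
        a = 0 ∧ c ∈ LinearMap.range D.mulVecLin := by
    simp [fromRows_mulVec, funext_iff, eq_comm]
  rw [bordered_eq_fromCols, replicateRow_zero, rank_fromCols_replicateCol, rank_fromRows_zero]
  simp only [hmem]

variable [Fintype ι] [DecidableEq ι] [Fintype K]

theorem sum_sub_rank_bordered_of_ne_zero {G : Type*} [AddCommGroup G] (g : ℕ → G)
    {b : ι → K} (hb : b ≠ 0) (D : Matrix ι ι K) :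
    ∑ c, (g (bordered 0 b c D).rank - g (bordered 1 b c D).rank) = 0 := by
  obtain ⟨j, hj⟩ := Function.ne_iff.mp hb
  set z : ι → K := Pi.single j (b j)⁻¹
  have hz : b ⬝ᵥ z = 1 := by
    rw [dotProduct_single]
    exact mul_inv_cancel₀ hj
  have hshift (c : ι → K) : (bordered 1 b (c + D *ᵥ z) D).rank = (bordered 0 b c D).rank := by
    rw [← hz, ← zero_add (b ⬝ᵥ z), rank_bordered_add_mulVec]
  rw [Finset.sum_sub_distrib, sub_eq_zero]
  exact Fintype.sum_equiv (Equiv.addRight (D *ᵥ z)) _ _ fun c => by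
    rw [Equiv.coe_addRight, hshift]

theorem sum_sub_rank_bordered_zero {G : Type*} [AddCommGroup G] (g : ℕ → G)
    (D : Matrix ι ι K) :
    ∑ c, (g (bordered 0 0 c D).rank - g (bordered 1 0 c D).rank) =
      Fintype.card K ^ D.rank • (g D.rank - g (D.rank + 1)) := by
  classical
  have hterm (c : ι → K) : g (bordered 0 0 c D).rank - g (bordered 1 0 c D).rank =
      if c ∈ LinearMap.range D.mulVecLin then g D.rank - g (D.rank + 1) else 0 := by
    simp only [rank_bordered_zero_row, true_and, one_ne_zero, false_and, if_false]
    split_ifs <;> simp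
  rw [Finset.sum_congr rfl fun c _ => hterm c, ← Finset.sum_filter, Finset.sum_const,
    ← Fintype.card_subtype, Module.card_eq_pow_finrank (K := K)]
  rfl

theorem sum_sub_rank_bordered {G : Type*} [AddCommGroup G] (g : ℕ → G) :
    ∑ D : Matrix ι ι K, ∑ b, ∑ c, (g (bordered 0 b c D).rank - g (bordered 1 b c D).rank) =
      ∑ D : Matrix ι ι K, Fintype.card K ^ D.rank • (g D.rank - g (D.rank + 1)) := by
  refine Finset.sum_congr rfl fun D _ => ?_
  rw [Fintype.sum_eq_single 0 fun b hb => sum_sub_rank_bordered_of_ne_zero g hb D]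
  exact sum_sub_rank_bordered_zero g D

theorem card_rank_corner_eq_sum (r : ℕ) (α : K) :
    Nat.card {X : Matrix (Unit ⊕ ι) (Unit ⊕ ι) K // X.rank = r ∧ X (.inl ()) (.inl ()) = α} =
      ∑ D : Matrix ι ι K, ∑ b, ∑ c, if (bordered α b c D).rank = r then 1 else 0 := by
  classical
  let e : {X : Matrix (Unit ⊕ ι) (Unit ⊕ ι) K // X.rank = r ∧ X (.inl ()) (.inl ()) = α} ≃
      {p : Matrix ι ι K × (ι → K) × (ι → K) // (bordered α p.2.1 p.2.2 p.1).rank = r} :=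
    { toFun X := ⟨(X.1.toBlocks₂₂, fun j => X.1 (.inl ()) (.inr j), fun i => X.1 (.inr i) (.inl ())),
        by obtain ⟨X, hX, rfl⟩ := X; rwa [bordered_toBlocks]⟩
      invFun p := ⟨bordered α p.1.2.1 p.1.2.2 p.1.1, p.2, rfl⟩
      left_inv := fun ⟨X, _, hα⟩ => Subtype.ext <| by subst hα; exact bordered_toBlocks X
      right_inv p := rfl }
  rw [Nat.card_congr e, Nat.card_eq_fintype_card, Fintype.card_subtype, Finset.card_filter,
    Fintype.sum_prod_type, Finset.sum_congr rfl fun D _ => Fintype.sum_prod_type _]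

theorem card_rank_corner_zero_sub_card_rank_corner_one {r : ℕ} (hr : 1 ≤ r) :
    (Nat.card {X : Matrix (Unit ⊕ ι) (Unit ⊕ ι) K // X.rank = r ∧ X (.inl ()) (.inl ()) = 0} : ℤ) -
      Nat.card {X : Matrix (Unit ⊕ ι) (Unit ⊕ ι) K // X.rank = r ∧ X (.inl ()) (.inl ()) = 1} =
      (Fintype.card K : ℤ) ^ r * Nat.card {D : Matrix ι ι K // D.rank = r} -
        (Fintype.card K : ℤ) ^ (r - 1) * Nat.card {D : Matrix ι ι K // D.rank = r - 1} := by
  classical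
  have hcard (s : ℕ) : (Nat.card {D : Matrix ι ι K // D.rank = s} : ℤ) =
      ∑ D : Matrix ι ι K, if D.rank = s then 1 else 0 := by
    rw [Finset.sum_boole, Nat.card_eq_fintype_card, Fintype.card_subtype]
  have hterm (s : ℕ) :
      Fintype.card K ^ s • ((if s = r then 1 else 0) - (if s + 1 = r then 1 else 0) : ℤ) =
        (Fintype.card K : ℤ) ^ r * (if s = r then 1 else 0) -
          (Fintype.card K : ℤ) ^ (r - 1) * (if s = r - 1 then 1 else 0) := by
    by_cases h₁ : s = r
    · subst h₁
      simp [show s ≠ s - 1 by omega]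
    by_cases h₂ : s + 1 = r
    · subst h₂
      simp
    simp [h₁, h₂, show s ≠ r - 1 by omega]
  simp only [card_rank_corner_eq_sum, Nat.cast_sum, Nat.cast_ite, Nat.cast_one, Nat.cast_zero,
    ← Finset.sum_sub_distrib]
  refine (sum_sub_rank_bordered fun s => if s = r then (1 : ℤ) else 0).trans ?_
  rw [hcard, hcard, Finset.mul_sum, Finset.mul_sum, ← Finset.sum_sub_distrib]
  exact Finset.sum_congr rfl fun D _ => hterm D.rank

end Matrix

theorem stmt4_general (F : Type) [Field F] [Fintype F] (q : ℕ) (hq : q = Fintype.card F)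
    (n r : ℕ) (hn : 1 ≤ n) (hr : 1 ≤ r) :
    (Nat.card {X : Matrix (Fin n) (Fin n) F // X.rank = r ∧ X ⟨0, hn⟩ ⟨0, hn⟩ = 0} : ℤ) -
      (Nat.card {X : Matrix (Fin n) (Fin n) F // X.rank = r ∧ X ⟨0, hn⟩ ⟨0, hn⟩ = 1} : ℤ) =
      (q : ℤ) ^ r * Nat.card {X : Matrix (Fin (n - 1)) (Fin (n - 1)) F // X.rank = r} -
      (q : ℤ) ^ (r - 1) * Nat.card {X : Matrix (Fin (n - 1)) (Fin (n - 1)) F // X.rank = r - 1} := by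
  subst hq
  let e : Unit ⊕ Fin (n - 1) ≃ Fin n := (Equiv.sumCongr finOneEquiv.symm (Equiv.refl _)).trans
    (finSumFinEquiv.trans (finCongr (Nat.add_sub_cancel' hn)))
  have he : e (.inl ()) = ⟨0, hn⟩ := rfl
  rw [← he, card_rank_reindex e, card_rank_reindex e]
  exact card_rank_corner_zero_sub_card_rank_corner_one hr

/-- `|Y_{n,r}^0| - |Y_{n,r}^1| = q^r |M(n-1,n-1,r,q)| - q^{r-1} |M(n-1,n-1,r-1,q)|`. -/
theorem stmt4 (F : Type) [Field F] [Fintype F] (q : ℕ) (hq : q = Fintype.card F)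
    (n r : ℕ) (hn : 1 ≤ n) (hr : 1 ≤ r) (hrn : r ≤ n) :
    (Nat.card {X : Matrix (Fin n) (Fin n) F // X.rank = r ∧ X ⟨0, hn⟩ ⟨0, hn⟩ = 0} : ℤ) -
      (Nat.card {X : Matrix (Fin n) (Fin n) F // X.rank = r ∧ X ⟨0, hn⟩ ⟨0, hn⟩ = 1} : ℤ) =
      (q : ℤ) ^ r * Nat.card {X : Matrix (Fin (n - 1)) (Fin (n - 1)) F // X.rank = r} -
      (q : ℤ) ^ (r - 1) * Nat.card {X : Matrix (Fin (n - 1)) (Fin (n - 1)) F // X.rank = r - 1} :=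
  stmt4_general F q hq n r hn hr
end

section
/- Let $q \geq 2$ and let $a, n$ be integers with $a \geq 2n \geq 0$. Then $\sum_{r = 0}^{n} |M(n,n,r,q)| \, (q;q)_{a-r} = q^{n^2} \frac{(q;q)_{a-n}^2}{(q;q)_{a-2n}}$, where $|M(n,n,r,q)|$ is the number of $n \times n$ matrices of rank $r$ over the field with $q$ elements and $(a;q)_k = \prod_{i=0}^{k-1}(1 - a q^i)$ is the $q$-Pochhammer symbol. -/
set_option maxHeartbeats 2000000

open Finset

def PhiA (x : ℚ) (k : ℕ) : ℚ := ∏ i ∈ range k, (1 - x ^ (i + 1))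
def PnA (x : ℚ) (k : ℕ) : ℚ := ∏ i ∈ range k, (x ^ (i + 1) - 1)
def MmA (x : ℚ) (n r : ℕ) : ℚ := ∏ j ∈ range r, (x ^ n - x ^ j) ^ 2 / (x ^ r - x ^ j)
def GfA (x : ℚ) (n a t : ℕ) : ℚ :=
  (x ^ t - 1) * (x ^ t - x ^ a) * (x ^ t - x ^ (2 * n + 2)) * x ^ t.choose 2 *
    PnA x n ^ 2 * PhiA x (a - 1 - t) /
    (x ^ (2 * t) * PnA x (n + 1 - t) ^ 2 * PnA x t)

variable {x : ℚ}

lemma hpow1 (hx : 1 < x) (k : ℕ) : 1 < x ^ (k + 1) := one_lt_pow₀ hx (Nat.succ_ne_zero k)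

lemma x_ne (hx : 1 < x) : x ≠ 0 := ne_of_gt (lt_trans one_pos hx)

lemma PhiA_ne (hx : 1 < x) (k : ℕ) : PhiA x k ≠ 0 :=
  prod_ne_zero_iff.mpr fun i _ => sub_ne_zero_of_ne (ne_of_lt (hpow1 hx i))

lemma PnA_ne (hx : 1 < x) (k : ℕ) : PnA x k ≠ 0 :=
  prod_ne_zero_iff.mpr fun i _ => sub_ne_zero_of_ne (ne_of_gt (hpow1 hx i))

lemma PnA_zero : PnA x 0 = 1 := Finset.prod_range_zero _

lemma PnA_succ (k : ℕ) : PnA x (k + 1) = PnA x k * (x ^ (k + 1) - 1) :=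
  prod_range_succ _ k

lemma PhiA_succ (k : ℕ) : PhiA x (k + 1) = PhiA x k * (1 - x ^ (k + 1)) :=
  prod_range_succ _ k

lemma prodlem (hx : 1 < x) : ∀ r k : ℕ,
    (∏ j ∈ range r, (x ^ (r + k) - x ^ j)) * PnA x k = x ^ r.choose 2 * PnA x (r + k) := by
  intro r
  induction r with
  | zero => intro k; simp
  | succ r IH =>
    intro k
    have h1 := IH (k + 1)
    have hr : r + (k + 1) = r + 1 + k := by omega
    rw [hr, PnA_succ] at h1
    rw [prod_range_succ, Nat.choose_succ_succ r 1, Nat.choose_one_right]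
    linear_combination x ^ r * h1

lemma prodlem_r (hx : 1 < x) (r : ℕ) :
    (∏ j ∈ range r, (x ^ r - x ^ j)) = x ^ r.choose 2 * PnA x r := by
  have h := prodlem hx r 0
  simpa [show PnA x 0 = 1 from Finset.prod_range_zero _] using h

lemma Mclosed (hx : 1 < x) {n r : ℕ} (h : r ≤ n) :
    MmA x n r = x ^ r.choose 2 * PnA x n ^ 2 / (PnA x (n - r) ^ 2 * PnA x r) := by
  obtain ⟨d, rfl⟩ := Nat.exists_eq_add_of_le h
  have h1 := prodlem hx r d
  rw [show r + d - r = d by omega]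
  have hne : (∏ j ∈ range r, (x ^ r - x ^ j)) ≠ 0 := by
    rw [prodlem_r hx r]
    exact mul_ne_zero (pow_ne_zero _ (x_ne hx)) (PnA_ne hx r)
  have hden : PnA x d ^ 2 * PnA x r ≠ 0 :=
    mul_ne_zero (pow_ne_zero _ (PnA_ne hx d)) (PnA_ne hx r)
  simp only [MmA]
  rw [Finset.prod_div_distrib, Finset.prod_pow, div_eq_div_iff hne hden, prodlem_r hx r]
  linear_combination ((∏ j ∈ range r, (x ^ (r + d) - x ^ j)) * PnA x d +
    x ^ r.choose 2 * PnA x (r + d)) * PnA x r * h1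

lemma certAbs (x u b ce N D S Q E : ℚ) (hx : x ≠ 0) (hu : u ≠ 0) (hD : D ≠ 0) (hS : S ≠ 0)
    (hb1 : x*b - 1 ≠ 0) (hu1 : x*u - 1 ≠ 0) :
    E*(N*(x*u*b-1))^2/((D*(x*b-1))^2*S) * (Q*(1-x*u*b^2*ce)*(1-x^2*u*b^2*ce))
      = (x*u^2*b^2 - x^2*u^2*b^2*ce) * (E*N^2/(D^2*S) * (Q*(1-x*u*b^2*ce)))
        + ((x*u-1)*(x*u - x^2*u^2*b^2*ce)*(x*u - x^2*u^2*b^2)*(E*u)*N^2*Q/(x^2*u^2*D^2*(S*(x*u-1)))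
          - (u-1)*(u - x^2*u^2*b^2*ce)*(u - x^2*u^2*b^2)*E*N^2*(Q*(1-x*u*b^2*ce))/(u^2*(D*(x*b-1))^2*S)) := by
  field_simp
  ring

lemma finAbs (x X ce N Q Pe E2 n2 : ℚ) (hx : x ≠ 0) (hX : X ≠ 0) (hN : N ≠ 0) (hPe : Pe ≠ 0)
    (hc1 : 1 - x*ce ≠ 0) (hX1 : x*X - 1 ≠ 0) :
    (x*X^2 - x^2*X^2*ce) * (n2*(Q*(1-x*X*ce))^2/(Pe*(1-x*ce)))
      + (x*X-1)*(x*X - x^2*X^2*ce)*(x*X - x^2*X^2)*E2*N^2*Q/(x^2*X^2*(N*(x*X-1)))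
      + E2*(N*(x*X-1))^2/(N*(x*X-1))*(Q*(1-x*X*ce))
    = n2*x*X^2*(Q*(1-x*X*ce))^2/Pe := by
  field_simp
  ring

lemma key (hx : 1 < x) : ∀ n a : ℕ, 2 * n ≤ a →
    ∑ r ∈ range (n + 1), MmA x n r * PhiA x (a - r) =
      x ^ n ^ 2 * PhiA x (a - n) ^ 2 / PhiA x (a - 2 * n) := by
  intro n
  induction n with
  | zero =>
    intro a _
    rw [Finset.sum_range_one]
    simp only [MmA, prod_range_zero, one_mul, Nat.sub_zero, Nat.mul_zero, pow_zero]
    field_simp [PhiA_ne hx a]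
    ring
  | succ n IH =>
    intro a ha
    obtain ⟨e, rfl⟩ : ∃ e, a = 2 * n + 2 + e := ⟨a - (2 * n + 2), by omega⟩
    have cert : ∀ r ∈ range (n + 1),
        MmA x (n + 1) r * PhiA x (2 * n + 2 + e - r) =
          (x ^ (2 * n + 1) - x ^ (2 * n + 2 + e)) *
              (MmA x n r * PhiA x (2 * n + 2 + e - 1 - r)) +
            (GfA x n (2 * n + 2 + e) (r + 1) - GfA x n (2 * n + 2 + e) r) := by
      intro r hr
      have hrn : r ≤ n := Nat.lt_succ_iff.mp (mem_range.mp hr)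
      obtain ⟨d, rfl⟩ := Nat.exists_eq_add_of_le hrn
      rw [Mclosed hx (show r ≤ r + d + 1 by omega), Mclosed hx (show r ≤ r + d from by omega)]
      simp only [GfA]
      rw [show r + d + 1 - r = d + 1 by omega, show r + d - r = d by omega,
        show r + d + 1 - (r + 1) = d by omega,
        show 2 * (r + d) + 2 + e - r = r + 2 * d + e + 1 + 1 by omega,
        show 2 * (r + d) + 2 + e - 1 - r = r + 2 * d + e + 1 by omega,
        show 2 * (r + d) + 2 + e - 1 - (r + 1) = r + 2 * d + e by omega,
        Nat.choose_succ_succ r 1, Nat.choose_one_right]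
      rw [PhiA_succ (r + 2 * d + e + 1), PhiA_succ (r + 2 * d + e),
        PnA_succ d, PnA_succ (r + d), PnA_succ r]
      have h1 : (1 : ℚ) - x ^ (r + 2 * d + e + 1) ≠ 0 :=
        sub_ne_zero_of_ne (ne_of_lt (hpow1 hx _))
      have h2 : x ^ (d + 1) - 1 ≠ 0 := sub_ne_zero_of_ne (ne_of_gt (hpow1 hx d))
      have h3 : x ^ (r + 1) - 1 ≠ 0 := sub_ne_zero_of_ne (ne_of_gt (hpow1 hx r))
      have hb1 : x * x ^ d - 1 ≠ 0 := by rw [← pow_succ']; exact h2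
      have hu1 : x * x ^ r - 1 ≠ 0 := by rw [← pow_succ']; exact h3
      linear_combination certAbs x (x ^ r) (x ^ d) (x ^ e) (PnA x (r + d)) (PnA x d) (PnA x r)
        (PhiA x (r + 2 * d + e)) (x ^ r.choose 2) (x_ne hx) (pow_ne_zero _ (x_ne hx))
        (PnA_ne hx d) (PnA_ne hx r) hb1 hu1
    rw [Finset.sum_range_succ, Finset.sum_congr rfl cert, Finset.sum_add_distrib,
      ← Finset.mul_sum, Finset.sum_range_sub (GfA x n (2 * n + 2 + e))]
    rw [IH (2 * n + 2 + e - 1) (by omega)]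
    have hG0 : GfA x n (2 * n + 2 + e) 0 = 0 := by simp [GfA]
    rw [hG0, sub_zero]
    rw [Mclosed hx (le_refl (n + 1))]
    simp only [GfA]
    rw [show 2 * n + 2 + e - 1 - n = n + e + 1 by omega,
      show 2 * n + 2 + e - 1 - 2 * n = e + 1 by omega,
      show 2 * n + 2 + e - 1 - (n + 1) = n + e by omega,
      show 2 * n + 2 + e - (n + 1) = n + e + 1 by omega,
      show 2 * n + 2 + e - 2 * (n + 1) = e by omega,
      show n + 1 - (n + 1) = 0 by omega,
      show (n + 1) ^ 2 = n ^ 2 + (2 * n + 1) by ring]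
    simp only [PnA_zero, one_pow, one_mul]
    rw [PhiA_succ (n + e), PhiA_succ e, PnA_succ n, pow_add x (n ^ 2) (2 * n + 1)]
    have h1 : (1 : ℚ) - x ^ (e + 1) ≠ 0 := sub_ne_zero_of_ne (ne_of_lt (hpow1 hx _))
    have h2 : x ^ (n + 1) - 1 ≠ 0 := sub_ne_zero_of_ne (ne_of_gt (hpow1 hx n))
    have h3 : (1 : ℚ) - x ^ (n + e + 1) ≠ 0 := sub_ne_zero_of_ne (ne_of_lt (hpow1 hx _))
    have hc1 : (1 : ℚ) - x * x ^ e ≠ 0 := by rw [← pow_succ']; exact h1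
    have hX1 : x * x ^ n - 1 ≠ 0 := by rw [← pow_succ']; exact h2
    linear_combination finAbs x (x ^ n) (x ^ e) (PnA x n) (PhiA x (n + e)) (PhiA x e)
      (x ^ (n + 1).choose 2) (x ^ n ^ 2) (x_ne hx) (pow_ne_zero _ (x_ne hx))
      (PnA_ne hx n) (PhiA_ne hx e) hc1 hX1

/-- the `q`-hypergeometric identity
`∑_{r=0}^n |M(n,n,r,q)| (q;q)_{a-r} = q^{n²} (q;q)_{a-n}² / (q;q)_{a-2n}`,
where `(q;q)_k = ∏_{i=1}^k (1 - qⁱ)` and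
`|M(n,n,r,q)| = ∏_{j=0}^{r-1} (qⁿ - qʲ)² / (qʳ - qʲ)`. -/
theorem stmt5 (q : ℤ) (hq : 2 ≤ q) (n a : ℕ) (ha : 2 * n ≤ a) :
    ∑ r ∈ Finset.range (n + 1),
      (∏ j ∈ Finset.range r, ((q : ℚ) ^ n - (q : ℚ) ^ j) ^ 2 / ((q : ℚ) ^ r - (q : ℚ) ^ j)) *
        ∏ i ∈ Finset.range (a - r), (1 - (q : ℚ) ^ (i + 1)) =
      (q : ℚ) ^ (n ^ 2) * (∏ i ∈ Finset.range (a - n), (1 - (q : ℚ) ^ (i + 1))) ^ 2 /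
        ∏ i ∈ Finset.range (a - 2 * n), (1 - (q : ℚ) ^ (i + 1)) := by
  have hx : (1 : ℚ) < (q : ℚ) := by
    have : (1 : ℤ) < q := by omega
    exact_mod_cast this
  have h := key hx n a ha
  simpa only [MmA, PhiA] using h
end

section
/- Let $F$ be a finite field with $q$ elements and $n \geq 1$. Then $\frac{1}{q^{n^2}} \sum_{r=0}^{n-1} q^{2n-1} |M(n-1,n-1,r,q)| \, (q;q)_{2n-2-r} = (q;q)_{n-1}^2$, where $|M(n-1,n-1,r,q)|$ is the number of $(n-1)\times(n-1)$ matrices of rank $r$ over $F$ and $(q;q)_k = \prod_{i=1}^{k}(1-q^i)$. -/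
/-!
Writing a rank-`r` map as `g ∘ f` with `f` surjective onto `F^r` and `g` injective, every such
factorization is unique up to `GL_r`, so `|M(m,m,r,q)| |GL_r| = ((q^m - 1) ⋯ (q^m - q^{r-1}))²`,
i.e. `|M(m,m,r,q)| = (-1)^r q^{r(r-1)/2} [m r]_q² (q;q)_r`. With `m = n - 1` the identity becomes
`∑_r (-1)^r q^{r(r-1)/2} [m r]_q (q^{m-r+1};q)_m = q^{m²} (q;q)_m`. Expanding the product by Gauss's
`q`-binomial theorem and exchanging the sums, the inner sum is again a `q`-binomial product
`∏_{j<m} (1 - q^{j-s})`, which vanishes unless `s = m`.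
-/

open Finset

section CommRing

variable {R : Type*} [CommRing R] (Q : R)

def qPochhammer (k : ℕ) : R := ∏ i ∈ range k, (1 - Q ^ (i + 1))

def qBinomial : ℕ → ℕ → R
  | _, 0 => 1
  | 0, _ + 1 => 0
  | m + 1, k + 1 => qBinomial m k + Q ^ (k + 1) * qBinomial m (k + 1)

@[simp]
lemma qBinomial_zero_right (m : ℕ) : qBinomial Q m 0 = 1 := by
  cases m <;> rfl

lemma qBinomial_succ_succ (m k : ℕ) :
    qBinomial Q (m + 1) (k + 1) = qBinomial Q m k + Q ^ (k + 1) * qBinomial Q m (k + 1) := rfl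

lemma qBinomial_eq_zero_of_lt {m k : ℕ} (h : m < k) : qBinomial Q m k = 0 := by
  induction m generalizing k with
  | zero => obtain ⟨k, rfl⟩ := Nat.exists_eq_succ_of_ne_zero h.ne'; rfl
  | succ m ih =>
    obtain ⟨k, rfl⟩ := Nat.exists_eq_succ_of_ne_zero (Nat.ne_zero_of_lt h)
    rw [qBinomial_succ_succ, ih (by omega), ih (by omega), mul_zero, add_zero]

@[simp]
lemma qBinomial_self (m : ℕ) : qBinomial Q m m = 1 := by
  induction m with
  | zero => rfl
  | succ m ih => rw [qBinomial_succ_succ, ih, qBinomial_eq_zero_of_lt Q m.lt_succ_self, mul_zero,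
      add_zero]

/-- The `q`-analogue of `m (m - 1) ⋯ (m - k + 1) = (m choose k) k!`. -/
lemma prod_one_sub_pow_sub_eq_qBinomial_mul (m k : ℕ) :
    ∏ j ∈ range k, (1 - Q ^ (m - j)) = qBinomial Q m k * qPochhammer Q k := by
  induction m generalizing k with
  | zero => cases k <;> simp [qPochhammer, prod_range_succ', qBinomial]
  | succ m ih =>
    cases k with
    | zero => simp [qPochhammer]
    | succ k =>
      have hP : qPochhammer Q (k + 1) = qPochhammer Q k * (1 - Q ^ (k + 1)) := prod_range_succ _ _
      have hrec : qBinomial Q m (k + 1) * qPochhammer Q (k + 1) =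
          qBinomial Q m k * qPochhammer Q k * (1 - Q ^ (m - k)) := by
        rw [← ih, ← ih, prod_range_succ]
      rw [prod_range_succ', Nat.sub_zero]
      simp only [Nat.add_sub_add_right]
      rw [ih, qBinomial_succ_succ]
      rcases le_or_gt k m with hkm | hmk
      · have hpow : Q ^ (k + 1) * Q ^ (m - k) = Q ^ (m + 1) := by
          rw [← pow_add]; congr 1; omega
        linear_combination (-qBinomial Q m k) * hP - Q ^ (k + 1) * hrec +
          (qBinomial Q m k * qPochhammer Q k) * hpow
      · simp [qBinomial_eq_zero_of_lt Q hmk, qBinomial_eq_zero_of_lt Q (hmk.trans k.lt_succ_self)]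

lemma qPochhammer_add (a b : ℕ) :
    qPochhammer Q (a + b) = qPochhammer Q a * ∏ i ∈ range b, (1 - Q ^ (a + i + 1)) :=
  prod_range_add _ a b

lemma qBinomial_mul_qPochhammer_mul_qPochhammer {m k : ℕ} (h : k ≤ m) :
    qBinomial Q m k * qPochhammer Q k * qPochhammer Q (m - k) = qPochhammer Q m := by
  have hreflect : ∏ i ∈ range k, (1 - Q ^ (m - k + i + 1)) = ∏ j ∈ range k, (1 - Q ^ (m - j)) := by
    rw [← prod_range_reflect]
    refine prod_congr rfl fun j hj => ?_
    rw [mem_range] at hj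
    congr 2
    omega
  rw [← prod_one_sub_pow_sub_eq_qBinomial_mul, ← hreflect, mul_comm, ← qPochhammer_add,
    Nat.sub_add_cancel h]

lemma prod_pow_sub_pow_eq {m k : ℕ} (h : k ≤ m) :
    ∏ j ∈ range k, (Q ^ m - Q ^ j) =
      (-1) ^ k * Q ^ k.choose 2 * qBinomial Q m k * qPochhammer Q k := by
  have hfactor : ∀ j ∈ range k, Q ^ m - Q ^ j = -Q ^ j * (1 - Q ^ (m - j)) := by
    intro j hj
    have : Q ^ j * Q ^ (m - j) = Q ^ m := by
      rw [← pow_add]; congr 1; have := mem_range.1 hj; omega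
    linear_combination -this
  rw [prod_congr rfl hfactor, prod_mul_distrib, prod_one_sub_pow_sub_eq_qBinomial_mul,
    prod_neg, prod_pow_eq_pow_sum, sum_range_id, Nat.choose_two_right, card_range]
  ring

/-- Gauss's `q`-binomial theorem. -/
lemma prod_one_add_mul_pow_eq_sum (m : ℕ) (x : R) :
    ∏ j ∈ range m, (1 + x * Q ^ j) =
      ∑ k ∈ range (m + 1), Q ^ k.choose 2 * qBinomial Q m k * x ^ k := by
  induction m generalizing x with
  | zero => simp
  | succ m ih =>
    set S := ∑ k ∈ range (m + 1), Q ^ k.choose 2 * qBinomial Q m k * (x * Q) ^ k with hS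
    have hshift : ∏ j ∈ range (m + 1), (1 + x * Q ^ j) = (1 + x) * S := by
      have : ∀ j, 1 + x * Q ^ (j + 1) = 1 + x * Q * Q ^ j := fun j => by ring
      simp only [prod_range_succ', this, ih, pow_zero, mul_one, S]
      ring
    have hlower : ∑ k ∈ range (m + 1), Q ^ (k + 1).choose 2 * qBinomial Q m k * x ^ (k + 1) =
        x * S := by
      rw [mul_sum]
      refine sum_congr rfl fun k _ => ?_
      rw [Nat.choose_succ_succ', Nat.choose_one_right]
      ring
    have hupper : ∑ k ∈ range (m + 1),
        Q ^ (k + 1).choose 2 * (Q ^ (k + 1) * qBinomial Q m (k + 1)) * x ^ (k + 1) = S - 1 := by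
      rw [eq_sub_iff_add_eq, sum_range_succ, qBinomial_eq_zero_of_lt Q m.lt_succ_self, hS,
        sum_range_succ' _ m]
      simp only [mul_pow, Nat.choose_zero_succ, pow_zero, qBinomial_zero_right, mul_zero,
        zero_mul, add_zero, mul_one]
      exact congrArg (· + 1) (sum_congr rfl fun k _ => by ring)
    rw [hshift, sum_range_succ', pow_zero, qBinomial_zero_right]
    simp only [qBinomial_succ_succ, mul_add, add_mul, sum_add_distrib, hupper, hlower]
    simp only [one_mul, Nat.choose_zero_succ, pow_zero, mul_one]
    ring

lemma prod_one_sub_mul_pow_eq_sum (m : ℕ) (y : R) :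
    ∏ j ∈ range m, (1 - y * Q ^ j) =
      ∑ k ∈ range (m + 1), (-1) ^ k * Q ^ k.choose 2 * qBinomial Q m k * y ^ k := by
  have h := prod_one_add_mul_pow_eq_sum Q m (-y)
  simp only [neg_mul, ← sub_eq_add_neg] at h
  rw [h]
  exact sum_congr rfl fun k _ => by rw [neg_pow]; ring

end CommRing

lemma choose_two_add_choose_two_add_self (m : ℕ) : m.choose 2 + m.choose 2 + m = m ^ 2 := by
  induction m with
  | zero => rfl
  | succ m ih => rw [Nat.choose_succ_succ', Nat.choose_one_right]; linear_combination ih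

section Field

variable {K : Type*} [Field K] {Q : K}

lemma sum_qBinomial_mul_prod_eq (hQ : Q ≠ 0) (m : ℕ) :
    ∑ r ∈ range (m + 1), (-1) ^ r * Q ^ r.choose 2 * qBinomial Q m r *
        ∏ j ∈ range m, (1 - Q ^ (m - r + j + 1)) =
      Q ^ (m ^ 2) * qPochhammer Q m := by
  set a : ℕ → K := fun k => (-1) ^ k * Q ^ k.choose 2 * qBinomial Q m k with ha
  have hexpand : ∀ r ∈ range (m + 1), ∏ j ∈ range m, (1 - Q ^ (m - r + j + 1)) =
      ∑ s ∈ range (m + 1), a s * (Q ^ (m + 1)) ^ s * ((Q⁻¹) ^ s) ^ r := by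
    intro r hr
    have hrm : r ≤ m := by rw [mem_range] at hr; omega
    have hpow : ∀ j, Q ^ (m - r + j + 1) = Q ^ (m + 1) * (Q⁻¹) ^ r * Q ^ j := fun j => by
      rw [inv_pow, ← pow_sub₀ _ hQ (hrm.trans m.le_succ), ← pow_add]
      congr 1; omega
    simp only [hpow, prod_one_sub_mul_pow_eq_sum]
    exact sum_congr rfl fun s _ => by rw [mul_pow, ← pow_mul, ← pow_mul, mul_comm r]; ring
  have hvanish : ∀ s ∈ range (m + 1), s ≠ m → ∏ j ∈ range m, (1 - (Q⁻¹) ^ s * Q ^ j) = 0 :=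
    fun s hs hsm => prod_eq_zero (i := s) (mem_range.2 (by simp at hs; omega))
      (by rw [← mul_pow, inv_mul_cancel₀ hQ, one_pow, sub_self])
  have hlast : ∏ j ∈ range m, (1 - (Q⁻¹) ^ m * Q ^ j) =
      ((Q⁻¹) ^ m) ^ m * ((-1) ^ m * Q ^ m.choose 2 * qPochhammer Q m) := by
    have : ∀ j ∈ range m, 1 - (Q⁻¹) ^ m * Q ^ j = (Q⁻¹) ^ m * (Q ^ m - Q ^ j) := fun j _ => by
      rw [mul_sub, ← mul_pow, inv_mul_cancel₀ hQ, one_pow]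
    rw [prod_congr rfl this, prod_mul_distrib, prod_const, card_range,
      prod_pow_sub_pow_eq Q le_rfl, qBinomial_self, mul_one]
  calc _ = ∑ s ∈ range (m + 1), a s * (Q ^ (m + 1)) ^ s *
        ∏ j ∈ range m, (1 - (Q⁻¹) ^ s * Q ^ j) := by
        rw [sum_congr rfl fun r hr => congrArg (a r * ·) (hexpand r hr)]
        simp only [mul_sum]
        rw [sum_comm]
        refine sum_congr rfl fun s _ => ?_
        rw [prod_one_sub_mul_pow_eq_sum, mul_sum]
        exact sum_congr rfl fun r _ => by ring
    _ = a m * (Q ^ (m + 1)) ^ m * ∏ j ∈ range m, (1 - (Q⁻¹) ^ m * Q ^ j) :=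
        sum_eq_single_of_mem m (self_mem_range_succ m) fun s hs hsm => by
          rw [hvanish s hs hsm, mul_zero]
    _ = Q ^ (m ^ 2) * qPochhammer Q m := by
        have hsign : (-1 : K) ^ m * (-1) ^ m = 1 := by rw [← mul_pow]; norm_num
        have hQpow : (Q ^ (m + 1)) ^ m * ((Q⁻¹) ^ m) ^ m = Q ^ m := by
          rw [← mul_pow, pow_succ, inv_pow, mul_comm (Q ^ m), mul_assoc,
            mul_inv_cancel₀ (pow_ne_zero m hQ), mul_one]
        simp only [hlast, ha, qBinomial_self]
        rw [← choose_two_add_choose_two_add_self, pow_add, pow_add]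
        linear_combination (Q ^ m.choose 2 * Q ^ m.choose 2 * qPochhammer Q m) *
          ((Q ^ (m + 1)) ^ m * ((Q⁻¹) ^ m) ^ m * hsign + hQpow)

lemma qPochhammer_ne_zero (hQ : ∀ i : ℕ, Q ^ (i + 1) ≠ 1) (k : ℕ) : qPochhammer Q k ≠ 0 :=
  prod_ne_zero_iff.2 fun i _ => sub_ne_zero.2 (hQ i).symm

end Field

section LinearMap

open LinearMap Module Function

lemma card_eq_card_mul_of_card_fiber {α β : Type*} [Finite α] [Finite β] (f : α → β) {c : ℕ}
    (h : ∀ b, Nat.card {a // f a = b} = c) : Nat.card α = Nat.card β * c := by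
  have := Fintype.ofFinite β
  rw [← Nat.card_congr (Equiv.sigmaFiberEquiv f), Nat.card_sigma]
  simp [h, Nat.card_eq_fintype_card]

variable {K V U W : Type*} [Field K] [AddCommGroup V] [Module K V] [AddCommGroup U] [Module K U]
  [AddCommGroup W] [Module K W]

instance [Finite V] [Finite W] : Finite (V →ₗ[K] W) :=
  Finite.of_injective _ DFunLike.coe_injective

instance [Finite V] [Finite W] : Finite (V ≃ₗ[K] W) :=
  Finite.of_injective _ DFunLike.coe_injective

lemma injective_piEquiv_iff {ι : Type*} [Fintype ι] (s : ι → W) :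
    Injective (piEquiv ι K W s) ↔ LinearIndependent K s := by
  rw [linearIndependent_iff_injective_fintypeLinearCombination]
  congr!
  ext c
  simp [piEquiv_apply_apply, Fintype.linearCombination_apply]

lemma surjective_pi_iff_linearIndependent {ι : Type*} [Fintype ι] (s : ι → Dual K V) :
    Surjective (LinearMap.pi s) ↔ LinearIndependent K s := by
  have hdual :
      (LinearMap.pi s).dualMap ∘ₗ (piEquiv ι K K).toLinearMap = piEquiv ι K (Dual K V) s := by
    ext c v
    simp [piEquiv_apply_apply, mul_comm]
  rw [← dualMap_injective_iff, ← injective_piEquiv_iff, ← hdual, coe_comp, LinearEquiv.coe_coe,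
    EquivLike.injective_comp]

variable (K V U W) in
noncomputable def compOfSurjectiveOfInjective :
    {f : V →ₗ[K] U // Surjective f} × {g : U →ₗ[K] W // Injective g} →
      {X : V →ₗ[K] W // finrank K (range X) = finrank K U} :=
  fun p => ⟨p.2.1 ∘ₗ p.1.1, by
    rw [range_comp_of_range_eq_top _ (range_eq_top.2 p.1.2), finrank_range_of_inj p.2.2]⟩

lemma range_eq_of_comp_eq {f : V →ₗ[K] U} {g : U →ₗ[K] W} {X : V →ₗ[K] W} (hf : Surjective f)
    (h : g ∘ₗ f = X) : range g = range X := by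
  rw [← h, range_comp_of_range_eq_top _ (range_eq_top.2 hf)]

/-- A factorization `X = g ∘ f` is determined by the isomorphism `g : U ≃ range X`. -/
noncomputable def compFiberEquiv (X : {X : V →ₗ[K] W // finrank K (range X) = finrank K U}) :
    {p // compOfSurjectiveOfInjective K V U W p = X} ≃ (U ≃ₗ[K] range X.1) where
  toFun p := (LinearEquiv.ofInjective _ p.1.2.2).trans
    (LinearEquiv.ofEq _ _ (range_eq_of_comp_eq p.1.1.2 (congrArg Subtype.val p.2)))
  invFun e := ⟨(⟨e.symm.toLinearMap ∘ₗ X.1.rangeRestrict,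
      e.symm.surjective.comp X.1.surjective_rangeRestrict⟩,
    ⟨(range X.1).subtype ∘ₗ e.toLinearMap, (range X.1).injective_subtype.comp e.injective⟩),
    Subtype.ext <| LinearMap.ext fun v => by simp [compOfSurjectiveOfInjective]⟩
  left_inv := by
    rintro ⟨⟨⟨f, hf⟩, ⟨g, hg⟩⟩, h⟩
    have hX : g ∘ₗ f = X.1 := congrArg Subtype.val h
    ext v
    · refine (LinearEquiv.symm_apply_eq _).2 (Subtype.ext ?_)
      simp [← hX]
    · rfl
  right_inv e := by ext; rfl

theorem card_finrank_range_mul_card_linearEquiv [Finite V] [Finite U] [Finite W] :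
    Nat.card {X : V →ₗ[K] W // finrank K (range X) = finrank K U} * Nat.card (U ≃ₗ[K] U) =
      Nat.card {f : V →ₗ[K] U // Surjective f} * Nat.card {g : U →ₗ[K] W // Injective g} := by
  rw [← Nat.card_prod (α := {f : V →ₗ[K] U // Surjective f})]
  refine (card_eq_card_mul_of_card_fiber (compOfSurjectiveOfInjective K V U W) fun X => ?_).symm
  let u : range X.1 ≃ₗ[K] U := LinearEquiv.ofFinrankEq _ _ X.2
  rw [Nat.card_congr (compFiberEquiv X)]
  exact Nat.card_congr
    { toFun e := e.trans u
      invFun e := e.trans u.symm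
      left_inv e := by ext; simp
      right_inv e := by ext; simp }

end LinearMap

section FiniteField

open LinearMap Module Function

variable {K V W : Type*} [Field K] [Fintype K] [AddCommGroup V] [Module K V] [AddCommGroup W]
  [Module K W]

local notation "q" => Fintype.card K

lemma card_injective_linearMap [Finite W] {r : ℕ} (hr : r ≤ finrank K W) :
    Nat.card {g : (Fin r → K) →ₗ[K] W // Injective g} =
      ∏ i : Fin r, (q ^ finrank K W - q ^ (i : ℕ)) := by
  rw [← card_linearIndependent hr]
  exact Nat.card_congr (Equiv.subtypeEquiv (piEquiv (Fin r) K W).toEquiv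
    fun s => (injective_piEquiv_iff s).symm).symm

lemma card_surjective_linearMap [Finite V] {r : ℕ} (hr : r ≤ finrank K V) :
    Nat.card {f : V →ₗ[K] (Fin r → K) // Surjective f} =
      ∏ i : Fin r, (q ^ finrank K V - q ^ (i : ℕ)) := by
  rw [← Subspace.dual_finrank_eq] at hr ⊢
  rw [← card_linearIndependent hr]
  exact Nat.card_congr (Equiv.subtypeEquiv (LinearEquiv.linearMapPi K).toEquiv
    fun s => (surjective_pi_iff_linearIndependent s).symm).symm

lemma card_linearEquiv_self (r : ℕ) :
    Nat.card ((Fin r → K) ≃ₗ[K] (Fin r → K)) = ∏ i : Fin r, (q ^ r - q ^ (i : ℕ)) := by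
  rw [← Matrix.card_GL_field]
  exact Nat.card_congr ((Matrix.GeneralLinearGroup.toLin.trans
    (GeneralLinearGroup.generalLinearEquiv K _)).toEquiv.symm)

theorem card_matrix_rank_mul_prod {m n r : ℕ} (hm : r ≤ m) (hn : r ≤ n) :
    Nat.card {X : Matrix (Fin m) (Fin n) K // X.rank = r} * ∏ i ∈ range r, (q ^ r - q ^ i) =
      (∏ i ∈ range r, (q ^ m - q ^ i)) * ∏ i ∈ range r, (q ^ n - q ^ i) := by
  have e : {X : Matrix (Fin m) (Fin n) K // X.rank = r} ≃
      {X : (Fin n → K) →ₗ[K] (Fin m → K) // finrank K (range X) = finrank K (Fin r → K)} :=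
    Equiv.subtypeEquiv Matrix.toLin'.toEquiv fun X => by
      rw [Module.finrank_fin_fun]; rfl
  simp only [← Fin.prod_univ_eq_prod_range (fun i => q ^ _ - q ^ i)]
  rw [Nat.card_congr e, ← card_linearEquiv_self, card_finrank_range_mul_card_linearEquiv,
    card_surjective_linearMap (by simpa using hn), card_injective_linearMap (by simpa using hm)]
  simp [mul_comm]

end FiniteField

section MatrixRankCount

variable {F : Type} [Field F] [Fintype F]

local notation "Q" => (Fintype.card F : ℚ)

lemma cast_prod_pow_sub_pow {R : Type*} [CommRing R] {q m r : ℕ} (hq : 1 ≤ q) (h : r ≤ m) :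
    ((∏ i ∈ range r, (q ^ m - q ^ i) : ℕ) : R) = ∏ i ∈ range r, ((q : R) ^ m - (q : R) ^ i) := by
  rw [Nat.cast_prod]
  refine prod_congr rfl fun i hi => ?_
  rw [Nat.cast_sub (Nat.pow_le_pow_right hq (by rw [mem_range] at hi; omega)), Nat.cast_pow,
    Nat.cast_pow]

lemma card_matrix_rank_mul_qPochhammer {m r : ℕ} (hr : r ≤ m) :
    (Nat.card {X : Matrix (Fin m) (Fin m) F // X.rank = r} : ℚ) * qPochhammer Q (2 * m - r) =
      qPochhammer Q m * ((-1) ^ r * Q ^ r.choose 2 * qBinomial Q m r *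
        ∏ j ∈ range m, (1 - Q ^ (m - r + j + 1))) := by
  have hq : 1 < Fintype.card F := Fintype.one_lt_card
  have hQ : ∀ i : ℕ, Q ^ (i + 1) ≠ 1 := fun i =>
    (one_lt_pow₀ (Nat.one_lt_cast.2 hq) i.succ_ne_zero).ne'
  have hcount := congrArg (Nat.cast (R := ℚ)) (card_matrix_rank_mul_prod (K := F) hr hr)
  rw [Nat.cast_mul, Nat.cast_mul, cast_prod_pow_sub_pow hq.le le_rfl,
    cast_prod_pow_sub_pow hq.le hr, prod_pow_sub_pow_eq _ le_rfl, prod_pow_sub_pow_eq _ hr,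
    qBinomial_self] at hcount
  have hunit : (-1 : ℚ) ^ r * Q ^ r.choose 2 * qPochhammer Q r ≠ 0 :=
    mul_ne_zero (mul_ne_zero (pow_ne_zero _ (by norm_num)) (pow_ne_zero _ (by positivity)))
      (qPochhammer_ne_zero hQ r)
  have hN : (Nat.card {X : Matrix (Fin m) (Fin m) F // X.rank = r} : ℚ) =
      (-1) ^ r * Q ^ r.choose 2 * qBinomial Q m r ^ 2 * qPochhammer Q r := by
    apply mul_right_cancel₀ hunit
    linear_combination hcount
  rw [hN, show 2 * m - r = (m - r) + m by omega, qPochhammer_add,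
    ← qBinomial_mul_qPochhammer_mul_qPochhammer Q hr]
  ring

lemma sum_card_matrix_rank_mul_qPochhammer (m : ℕ) :
    ∑ r ∈ range (m + 1),
        (Nat.card {X : Matrix (Fin m) (Fin m) F // X.rank = r} : ℚ) * qPochhammer Q (2 * m - r) =
      Q ^ (m ^ 2) * qPochhammer Q m ^ 2 := by
  rw [sum_congr rfl fun r hr => card_matrix_rank_mul_qPochhammer (by rw [mem_range] at hr; omega),
    ← mul_sum, sum_qBinomial_mul_prod_eq (by positivity)]
  ring

end MatrixRankCount

/-- `(1/q^{n²}) ∑_{r=0}^{n-1} q^{2n-1} |M(n-1,n-1,r,q)| (q;q)_{2n-2-r} = (q;q)_{n-1}²`. -/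
theorem stmt6 (F : Type) [Field F] [Fintype F] (q : ℕ) (hq : q = Fintype.card F) (n : ℕ)
    (hn : 1 ≤ n) :
    (1 / (q : ℚ) ^ (n ^ 2)) *
      ∑ r ∈ Finset.range n,
        (q : ℚ) ^ (2 * n - 1) *
          (Nat.card {X : Matrix (Fin (n - 1)) (Fin (n - 1)) F // X.rank = r} : ℚ) *
          ∏ i ∈ Finset.range (2 * n - 2 - r), (1 - (q : ℚ) ^ (i + 1)) =
      (∏ i ∈ Finset.range (n - 1), (1 - (q : ℚ) ^ (i + 1))) ^ 2 := by
  subst hq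
  obtain ⟨m, rfl⟩ : ∃ m, n = m + 1 := ⟨n - 1, by omega⟩
  have hterm : ∀ r ∈ range (m + 1),
      (Fintype.card F : ℚ) ^ (2 * (m + 1) - 1) *
          (Nat.card {X : Matrix (Fin (m + 1 - 1)) (Fin (m + 1 - 1)) F // X.rank = r} : ℚ) *
          ∏ i ∈ range (2 * (m + 1) - 2 - r), (1 - (Fintype.card F : ℚ) ^ (i + 1)) =
        (Fintype.card F : ℚ) ^ (2 * m + 1) *
          ((Nat.card {X : Matrix (Fin m) (Fin m) F // X.rank = r} : ℚ) *
            qPochhammer (Fintype.card F : ℚ) (2 * m - r)) := fun r _ => by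
    rw [show 2 * (m + 1) - 1 = 2 * m + 1 by omega, show 2 * (m + 1) - 2 - r = 2 * m - r by omega,
      mul_assoc]
    rfl
  rw [sum_congr rfl hterm, ← mul_sum, sum_card_matrix_rank_mul_qPochhammer,
    show (m + 1) ^ 2 = 2 * m + 1 + m ^ 2 by ring, pow_add]
  have hQ : (Fintype.card F : ℚ) ≠ 0 := by positivity
  field_simp
  rfl
end
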